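/- arXiv:1211.2284 — 2 statements merged into one kernel-verified Lean document; each statement's English description precedes it below -/
import Mathlib

section
/- The function x ↦ x e^{x^2/2} (1 - Φ(x)) is monotonically increasing on (0, ∞), where Φ is the standard normal CDF. -/
open Real

/-- The standard normal cumulative distribution function. -/
noncomputable def stdNormalCDF (x : ℝ) : ℝ :=
  ∫ t in Set.Iic x, Real.exp (-t ^ 2 / 2) / Real.sqrt (2 * Real.pi)

/-!
The substitution `t = x + u / x` in the Gaussian tail integral gives
`x e^{x²/2} (1 - Φ(x)) = (2π)^{-1/2} ∫_{u > 0} e^{-u - u²/(2x²)} du`,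
and for every `u > 0` the integrand is strictly increasing in `x > 0`.
-/

open MeasureTheory Set

theorem setIntegral_lt_setIntegral_of_forall_lt {α : Type*} [MeasurableSpace α] {μ : Measure α}
    {s : Set α} {f g : α → ℝ} (hs : MeasurableSet s) (hμs : μ s ≠ 0)
    (hf : IntegrableOn f s μ) (hg : IntegrableOn g s μ) (hlt : ∀ x ∈ s, f x < g x) :
    ∫ x in s, f x ∂μ < ∫ x in s, g x ∂μ := by
  rw [← sub_pos, ← integral_sub hg hf]
  refine (setIntegral_pos_iff_support_of_nonneg_ae (f := g - f) ?_ (hg.sub hf)).2 ?_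
  · filter_upwards [ae_restrict_mem hs] with x hx
    exact (sub_pos.2 (hlt x hx)).le
  · have hsupp : Function.support (g - f) ∩ s = s :=
      inter_eq_right.2 fun x hx => (sub_pos.2 (hlt x hx)).ne'
    rwa [hsupp, pos_iff_ne_zero]

theorem integral_comp_add_right_Ioi {E : Type*} [NormedAddCommGroup E] [NormedSpace ℝ E]
    (g : ℝ → E) (a d : ℝ) : ∫ x in Ioi a, g (x + d) = ∫ x in Ioi (a + d), g x := by
  have := (measurePreserving_add_right volume d).setIntegral_preimage_emb
    (MeasurableEquiv.addRight d).measurableEmbedding g (Ioi (a + d))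
  rwa [preimage_add_const_Ioi, add_sub_cancel_right] at this

lemma integrable_exp_neg_sq_div_two : Integrable fun t : ℝ => exp (-t ^ 2 / 2) := by
  simpa [neg_div, div_eq_inv_mul] using integrable_exp_neg_mul_sq (b := 1 / 2) (by norm_num)

lemma integral_exp_neg_sq_div_two : ∫ t : ℝ, exp (-t ^ 2 / 2) = √(2 * π) := by
  simpa [neg_div, div_eq_inv_mul] using integral_gaussian (1 / 2)

lemma one_sub_stdNormalCDF (x : ℝ) :
    1 - stdNormalCDF x = (∫ t in Ioi x, exp (-t ^ 2 / 2)) / √(2 * π) := by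
  have hsplit := intervalIntegral.integral_Iic_add_Ioi (b := x)
    integrable_exp_neg_sq_div_two.integrableOn integrable_exp_neg_sq_div_two.integrableOn
  rw [integral_exp_neg_sq_div_two] at hsplit
  have hpos : 0 < √(2 * π) := by positivity
  rw [stdNormalCDF, integral_div, eq_div_iff hpos.ne', sub_mul, div_mul_cancel₀ _ hpos.ne']
  linarith

lemma integrableOn_exp_neg_sub_sq_div (x : ℝ) :
    IntegrableOn (fun u : ℝ => exp (-u - u ^ 2 / (2 * x ^ 2))) (Ioi 0) := by
  refine (exp_neg_integrableOn_Ioi 0 one_pos).mono' (by fun_prop) (.of_forall fun u => ?_)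
  rw [norm_of_nonneg (exp_pos _).le, exp_le_exp]
  have : 0 ≤ u ^ 2 / (2 * x ^ 2) := by positivity
  linarith

lemma mul_exp_mul_integral_Ioi_exp_neg_sq_div_two {x : ℝ} (hx : 0 < x) :
    x * exp (x ^ 2 / 2) * ∫ t in Ioi x, exp (-t ^ 2 / 2)
      = ∫ u in Ioi 0, exp (-u - u ^ 2 / (2 * x ^ 2)) := by
  have hexp (s : ℝ) : exp (x ^ 2 / 2) * exp (-(s + x) ^ 2 / 2)
      = exp (-(x * s) - (x * s) ^ 2 / (2 * x ^ 2)) := by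
    rw [← exp_add]
    congr 1
    field_simp
    ring
  rw [mul_assoc, ← zero_add x, ← integral_comp_add_right_Ioi, zero_add, ← integral_const_mul]
  simp_rw [hexp]
  rw [integral_comp_mul_left_Ioi (fun u => exp (-u - u ^ 2 / (2 * x ^ 2))) 0 hx, mul_zero,
    smul_eq_mul, mul_inv_cancel_left₀ hx.ne']

lemma strictMonoOn_integral_exp_neg_sub_sq_div :
    StrictMonoOn (fun x : ℝ => ∫ u in Ioi 0, exp (-u - u ^ 2 / (2 * x ^ 2))) (Ioi 0) := by
  intro a (ha : 0 < a) b _ hab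
  refine setIntegral_lt_setIntegral_of_forall_lt measurableSet_Ioi (by simp)
    (integrableOn_exp_neg_sub_sq_div a) (integrableOn_exp_neg_sub_sq_div b)
    fun u (hu : 0 < u) => ?_
  gcongr exp (-u - u ^ 2 / (2 * ?_ ^ 2))

/-- The function `x ↦ x e^{x²/2} (1 - Φ(x))` is increasing on `(0, ∞)`. -/
theorem xexp_mul_gaussTail_strictMonoOn :
    StrictMonoOn (fun x : ℝ => x * Real.exp (x ^ 2 / 2) * (1 - stdNormalCDF x))
      (Set.Ioi (0 : ℝ)) := by
  intro a ha b hb hab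
  simp only [one_sub_stdNormalCDF, ← mul_div_assoc, mul_exp_mul_integral_Ioi_exp_neg_sq_div_two ha,
    mul_exp_mul_integral_Ioi_exp_neg_sq_div_two hb]
  exact div_lt_div_of_pos_right (strictMonoOn_integral_exp_neg_sub_sq_div ha hb hab) (by positivity)
end

section
/- Let Z, Z' be independent standard Gaussian random variables. For every ρ ∈ [0,1] and x > 0, with θ = √((1-ρ)/(1+ρ)), one has Φ̄(θx) ≤ P(ρZ + √(1-ρ²) Z' > x | Z > x) ≤ (1+ρ) Φ̄(θx). -/
open MeasureTheory ProbabilityTheory Real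

/-- The standard normal tail probability `Φ̄(x) = P(Z > x)`. -/
noncomputable def gaussTail (x : ℝ) : ℝ :=
  ((gaussianReal 0 1) (Set.Ioi x)).toReal

/-!
With `s = √(1 - ρ²)` one has `s θ = 1 - ρ`. Write `Y = ρ Z + s Z'`. The quadrant
`{Z > x, Z' > θ x}` lies inside `{Z > x, Y > x}`, which gives the lower bound. The rest of
`{Z > x, Y > x}` lies in the wedge `{Z' ≤ θ x, Y > x}`, of probability
`∫_{t ≤ θ x} Φ̄((x - s t)/ρ) φ(t) dt`. There `(x - s t)/ρ ≥ x`, so the monotonicity of the Mills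
ratio `Φ̄/φ`, combined with the rotation invariance of `φ(a) φ(b)`, bounds the integrand by
`Φ̄(x) φ((t - s x)/ρ)`, whose integral is `ρ Φ̄(x) Φ̄(θ x)`.
-/

open Set ENNReal
open scoped NNReal

local notation "γ" => gaussianReal 0 1
local notation "φ" => gaussianPDF 0 1

lemma gaussianPDFReal_mul_gaussianPDFReal (a b : ℝ) :
    gaussianPDFReal 0 1 a * gaussianPDFReal 0 1 b = (2 * π)⁻¹ * rexp (-(a ^ 2 + b ^ 2) / 2) := by
  simp only [gaussianPDFReal, NNReal.coe_one, mul_one, sub_zero]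
  rw [mul_mul_mul_comm, ← mul_inv, Real.mul_self_sqrt (by positivity), ← Real.exp_add]
  ring_nf

lemma gaussianPDF_mul_gaussianPDF_le {a b a' b' : ℝ} (h : a' ^ 2 + b' ^ 2 ≤ a ^ 2 + b ^ 2) :
    φ a * φ b ≤ φ a' * φ b' := by
  simp only [gaussianPDF, ← ofReal_mul (gaussianPDFReal_nonneg _ _ _),
    gaussianPDFReal_mul_gaussianPDFReal]
  gcongr

lemma gaussianPDF_mul_gaussianPDF_eq {a b a' b' : ℝ} (h : a ^ 2 + b ^ 2 = a' ^ 2 + b' ^ 2) :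
    φ a * φ b = φ a' * φ b' :=
  le_antisymm (gaussianPDF_mul_gaussianPDF_le h.ge) (gaussianPDF_mul_gaussianPDF_le h.le)

lemma gaussianReal_Ioi_eq_setLIntegral_add (x d : ℝ) :
    γ (Ioi (x + d)) = ∫⁻ t in Ioi x, φ (t + d) := by
  rw [gaussianReal_apply 0 one_ne_zero, ← (measurePreserving_add_right volume d)
    |>.setLIntegral_comp_preimage_emb (measurableEmbedding_addRight d), preimage_add_const_Ioi,
    add_sub_cancel_right]

-- The Mills ratio `γ (Ioi y) / φ y` is antitone.
lemma gaussianReal_Ioi_mul_gaussianPDF_le {x y : ℝ} (hxy : x ≤ y) :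
    γ (Ioi y) * φ x ≤ γ (Ioi x) * φ y := by
  obtain ⟨d, hd, rfl⟩ : ∃ d, 0 ≤ d ∧ y = x + d := ⟨y - x, sub_nonneg.2 hxy, by ring⟩
  rw [gaussianReal_Ioi_eq_setLIntegral_add, ← lintegral_mul_const' _ _ gaussianPDF_ne_top,
    gaussianReal_apply 0 one_ne_zero, ← lintegral_mul_const' _ _ gaussianPDF_ne_top]
  refine setLIntegral_mono' measurableSet_Ioi fun t (ht : x < t) => ?_
  exact gaussianPDF_mul_gaussianPDF_le (by nlinarith)

lemma gaussianPDF_mul_gaussianReal_Ioi_le {ρ s x t : ℝ} (hρ : ρ ≠ 0) (hsρ : s ^ 2 + ρ ^ 2 = 1)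
    (hx : x ≤ (x - s * t) / ρ) :
    φ t * γ (Ioi ((x - s * t) / ρ)) ≤ φ ((t - s * x) / ρ) * γ (Ioi x) := by
  have hrot : t ^ 2 + ((x - s * t) / ρ) ^ 2 = x ^ 2 + ((t - s * x) / ρ) ^ 2 := by
    field_simp
    linear_combination (t ^ 2 - x ^ 2) * hsρ
  rw [← ENNReal.mul_le_mul_iff_left (gaussianPDF_pos 0 one_ne_zero x).ne' gaussianPDF_ne_top]
  calc φ t * γ (Ioi ((x - s * t) / ρ)) * φ x
      = φ t * (γ (Ioi ((x - s * t) / ρ)) * φ x) := mul_assoc _ _ _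
    _ ≤ φ t * (γ (Ioi x) * φ ((x - s * t) / ρ)) :=
      mul_le_mul' le_rfl (gaussianReal_Ioi_mul_gaussianPDF_le hx)
    _ = φ x * φ ((t - s * x) / ρ) * γ (Ioi x) := by
      rw [mul_left_comm, gaussianPDF_mul_gaussianPDF_eq hrot, mul_comm]
    _ = φ ((t - s * x) / ρ) * γ (Ioi x) * φ x := by ring

lemma gaussianPDF_div_eq {r : ℝ} (hr : 0 < r) (b t : ℝ) :
    φ ((t - b) / r) = ENNReal.ofReal r * gaussianPDF b (.mk (r ^ 2) (sq_nonneg r) : ℝ≥0) t := by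
  simp only [gaussianPDF]
  rw [← ofReal_mul hr.le, div_eq_inv_mul, gaussianPDFReal_inv_mul hr.ne', abs_of_pos hr,
    gaussianPDFReal_sub]
  simp

lemma gaussianReal_eq_map_affine {r : ℝ} (b : ℝ) :
    gaussianReal b (.mk (r ^ 2) (sq_nonneg r) : ℝ≥0) = Measure.map (fun z => r * z + b) γ := by
  change _ = Measure.map ((· + b) ∘ (r * ·)) γ
  rw [← Measure.map_map (by fun_prop) (by fun_prop), gaussianReal_map_const_mul,
    gaussianReal_map_add_const]
  simp

lemma setLIntegral_Iic_gaussianPDF_div {r : ℝ} (hr : 0 < r) (b c : ℝ) :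
    ∫⁻ t in Iic c, φ ((t - b) / r) = ENNReal.ofReal r * γ (Iic ((c - b) / r)) := by
  simp_rw [gaussianPDF_div_eq hr]
  rw [lintegral_const_mul _ (measurable_gaussianPDF _ _),
    ← gaussianReal_apply b (by simpa [← NNReal.coe_inj] using hr.ne'),
    gaussianReal_eq_map_affine, Measure.map_apply (by fun_prop) measurableSet_Iic]
  congr 2
  ext z
  simp only [mem_preimage, mem_Iic, le_div_iff₀ hr]
  constructor <;> intro h <;> linarith

lemma gaussianReal_Iic_neg (c : ℝ) : γ (Iic (-c)) = γ (Ioi c) := by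
  have hc : γ {c} = 0 := gaussianReal_absolutelyContinuous 0 one_ne_zero (Real.volume_singleton)
  conv_lhs => rw [← neg_zero, ← gaussianReal_map_neg]
  rw [Measure.map_apply measurable_neg measurableSet_Iic, neg_preimage, neg_Iic, neg_neg,
    measure_congr (Ioi_ae_eq_Ici' hc).symm]

lemma setLIntegral_gaussianReal {f : ℝ → ℝ≥0∞} (hf : Measurable f) {A : Set ℝ}
    (hA : MeasurableSet A) : ∫⁻ t in A, f t ∂γ = ∫⁻ t in A, φ t * f t := by
  rw [gaussianReal_of_var_ne_zero 0 one_ne_zero,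
    setLIntegral_withDensity_eq_setLIntegral_mul _ (measurable_gaussianPDF 0 1) hf hA]
  rfl

lemma antitone_gaussianReal_Ioi : Antitone fun y => γ (Ioi y) :=
  fun _ _ h => measure_mono (Ioi_subset_Ioi h)

lemma gaussianReal_Ioi_ne_zero (x : ℝ) : γ (Ioi x) ≠ 0 := fun h => by
  simpa using gaussianReal_absolutelyContinuous' 0 one_ne_zero h

section HalfPlane

variable {ρ s θ : ℝ}

lemma gaussianReal_prod_wedge_eq_setLIntegral (hρ : 0 < ρ) (x c : ℝ) :
    (Measure.prod γ γ) {p | p.2 ≤ c ∧ x < ρ * p.1 + s * p.2}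
      = ∫⁻ t in Iic c, φ t * γ (Ioi ((x - s * t) / ρ)) := by
  have hslice : ∀ t, γ ((fun z => (z, t)) ⁻¹' {p : ℝ × ℝ | p.2 ≤ c ∧ x < ρ * p.1 + s * p.2})
      = (Iic c).indicator (fun t => γ (Ioi ((x - s * t) / ρ))) t := by
    intro t
    by_cases ht : t ≤ c
    · rw [indicator_of_mem (show t ∈ Iic c from ht)]
      congr 1
      ext z
      simp only [mem_preimage, mem_ofPred_eq, mem_Ioi, div_lt_iff₀ hρ, ht, true_and]
      constructor <;> intro h <;> linarith
    · simp [ht]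
  rw [Measure.prod_apply_symm (by measurability), funext hslice,
    lintegral_indicator measurableSet_Iic, setLIntegral_gaussianReal _ measurableSet_Iic]
  exact antitone_gaussianReal_Ioi.measurable.comp (by fun_prop)

lemma mul_eq_one_sub_of_mul_one_add_eq (hρ : 0 ≤ ρ) (hsρ : s ^ 2 + ρ ^ 2 = 1)
    (hθ : θ * (1 + ρ) = s) : s * θ = 1 - ρ := by
  have h : (1 + ρ) * (s * θ - (1 - ρ)) = 0 := by linear_combination s * hθ + hsρ
  rcases mul_eq_zero.1 h with h | h <;> linarith

lemma gaussianReal_prod_wedge_le (hρ : 0 < ρ) (hs : 0 ≤ s) (hsρ : s ^ 2 + ρ ^ 2 = 1)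
    (hθ : θ * (1 + ρ) = s) (x : ℝ) :
    (Measure.prod γ γ) {p | p.2 ≤ θ * x ∧ x < ρ * p.1 + s * p.2}
      ≤ ENNReal.ofReal ρ * γ (Ioi x) * γ (Ioi (θ * x)) := by
  have hsθ := mul_eq_one_sub_of_mul_one_add_eq hρ.le hsρ hθ
  rw [gaussianReal_prod_wedge_eq_setLIntegral hρ]
  calc ∫⁻ t in Iic (θ * x), φ t * γ (Ioi ((x - s * t) / ρ))
      ≤ ∫⁻ t in Iic (θ * x), φ ((t - s * x) / ρ) * γ (Ioi x) := by
        refine setLIntegral_mono' measurableSet_Iic fun t (ht : t ≤ θ * x) => ?_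
        refine gaussianPDF_mul_gaussianReal_Ioi_le hρ.ne' hsρ ?_
        have hst : s * t ≤ (1 - ρ) * x := by
          calc s * t ≤ s * (θ * x) := mul_le_mul_of_nonneg_left ht hs
            _ = (1 - ρ) * x := by rw [← hsθ]; ring
        rw [le_div_iff₀ hρ]
        linarith
    _ = ENNReal.ofReal ρ * γ (Iic ((θ * x - s * x) / ρ)) * γ (Ioi x) := by
        rw [lintegral_mul_const' _ _ (measure_ne_top _ _), setLIntegral_Iic_gaussianPDF_div hρ]
    _ = ENNReal.ofReal ρ * γ (Ioi x) * γ (Ioi (θ * x)) := by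
        rw [show (θ * x - s * x) / ρ = -(θ * x) by field_simp; linear_combination x * hθ,
          gaussianReal_Iic_neg]
        ring

lemma gaussianReal_prod_tail_inter_halfPlane_ge (hρ : 0 ≤ ρ) (hs : 0 ≤ s)
    (hsρ : s ^ 2 + ρ ^ 2 = 1) (hθ : θ * (1 + ρ) = s) (x : ℝ) :
    γ (Ioi x) * γ (Ioi (θ * x))
      ≤ (Measure.prod γ γ) ({p | x < p.1} ∩ {p | x < ρ * p.1 + s * p.2}) := by
  have hsθ := mul_eq_one_sub_of_mul_one_add_eq hρ hsρ hθ
  rw [← Measure.prod_prod]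
  refine measure_mono fun p ⟨(hz : x < p.1), (ht : θ * x < p.2)⟩ => ⟨hz, ?_⟩
  have hpos : 0 < ρ * (p.1 - x) + s * (p.2 - θ * x) := by
    rcases hρ.eq_or_lt with rfl | hρ
    · obtain rfl : s = 1 := by nlinarith
      linarith
    · nlinarith [mul_pos hρ (sub_pos.2 hz), mul_nonneg hs (sub_pos.2 ht).le]
  change x < ρ * p.1 + s * p.2
  linear_combination hpos - x * hsθ

lemma gaussianReal_prod_tail_inter_halfPlane_le (hρ : 0 ≤ ρ) (hs : 0 ≤ s)
    (hsρ : s ^ 2 + ρ ^ 2 = 1) (hθ : θ * (1 + ρ) = s) (x : ℝ) :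
    (Measure.prod γ γ) ({p | x < p.1} ∩ {p | x < ρ * p.1 + s * p.2})
      ≤ ENNReal.ofReal (1 + ρ) * γ (Ioi x) * γ (Ioi (θ * x)) := by
  have hsplit : {p : ℝ × ℝ | x < p.1} ∩ {p | x < ρ * p.1 + s * p.2}
      ⊆ Ioi x ×ˢ Ioi (θ * x) ∪ {p | p.2 ≤ θ * x ∧ x < ρ * p.1 + s * p.2} := by
    rintro p ⟨hz, hy⟩
    by_cases ht : θ * x < p.2
    · exact Or.inl ⟨hz, ht⟩
    · exact Or.inr ⟨not_lt.1 ht, hy⟩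
  have hwedge : (Measure.prod γ γ) {p | p.2 ≤ θ * x ∧ x < ρ * p.1 + s * p.2}
      ≤ ENNReal.ofReal ρ * γ (Ioi x) * γ (Ioi (θ * x)) := by
    rcases hρ.eq_or_lt with rfl | hρ
    · have hs1 : s = 1 := by nlinarith
      have hθ1 : θ = 1 := by linarith
      subst hs1 hθ1
      refine le_of_eq_of_le (measure_mono_null (fun p ⟨h1, h2⟩ => ?_) measure_empty) bot_le
      linarith
    · exact gaussianReal_prod_wedge_le hρ hs hsρ hθ x
  calc _ ≤ (Measure.prod γ γ) (Ioi x ×ˢ Ioi (θ * x))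
          + (Measure.prod γ γ) {p | p.2 ≤ θ * x ∧ x < ρ * p.1 + s * p.2} :=
        (measure_mono hsplit).trans (measure_union_le _ _)
    _ ≤ γ (Ioi x) * γ (Ioi (θ * x)) + ENNReal.ofReal ρ * γ (Ioi x) * γ (Ioi (θ * x)) := by
        rw [Measure.prod_prod]
        gcongr
    _ = ENNReal.ofReal (1 + ρ) * γ (Ioi x) * γ (Ioi (θ * x)) := by
        rw [ENNReal.ofReal_add zero_le_one hρ, ofReal_one]; ring

lemma gaussianReal_prod_cond_halfPlane (hρ : 0 ≤ ρ) (hs : 0 ≤ s)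
    (hsρ : s ^ 2 + ρ ^ 2 = 1) (hθ : θ * (1 + ρ) = s) (x : ℝ) :
    γ (Ioi (θ * x)) ≤ (Measure.prod γ γ)[{p | x < ρ * p.1 + s * p.2} | {p | x < p.1}] ∧
      (Measure.prod γ γ)[{p | x < ρ * p.1 + s * p.2} | {p | x < p.1}]
        ≤ ENNReal.ofReal (1 + ρ) * γ (Ioi (θ * x)) := by
  have hB : Measure.prod γ γ {p | x < p.1} = γ (Ioi x) := by
    change Measure.prod γ γ (Prod.fst ⁻¹' Ioi x) = _
    rw [← Measure.fst_apply measurableSet_Ioi, Measure.fst_prod]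
  have h0 := gaussianReal_Ioi_ne_zero x
  have htop := measure_ne_top γ (Ioi x)
  rw [cond_apply (measurableSet_lt measurable_const measurable_fst), hB, ← ENNReal.div_eq_inv_mul]
  constructor
  · rw [ENNReal.le_div_iff_mul_le (.inl h0) (.inl htop), mul_comm]
    exact gaussianReal_prod_tail_inter_halfPlane_ge hρ hs hsρ hθ x
  · rw [ENNReal.div_le_iff h0 htop, mul_right_comm]
    exact gaussianReal_prod_tail_inter_halfPlane_le hρ hs hsρ hθ x

end HalfPlane

lemma hasLaw_of_map_eq {Ω 𝓧 : Type*} [MeasurableSpace Ω] [MeasurableSpace 𝓧] {P : Measure Ω}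
    {μ : Measure 𝓧} [NeZero μ] {X : Ω → 𝓧} (h : P.map X = μ) : HasLaw X μ P :=
  ⟨.of_map_ne_zero (h ▸ NeZero.ne μ), h⟩

lemma ProbabilityTheory.HasLaw.cond_preimage {Ω 𝓧 : Type*} [MeasurableSpace Ω]
    [MeasurableSpace 𝓧] {P : Measure Ω} {μ : Measure 𝓧} {X : Ω → 𝓧} (hX : HasLaw X μ P)
    {s t : Set 𝓧} (hs : MeasurableSet s) (ht : MeasurableSet t) :
    P[X ⁻¹' t | X ⁻¹' s] = μ[t | s] := by
  rw [cond_apply hs, ← hX.map_eq, Measure.map_apply_of_aemeasurable hX.aemeasurable hs,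
    Measure.map_apply_of_aemeasurable hX.aemeasurable (hs.inter ht), preimage_inter, cond,
    Measure.smul_apply, Measure.restrict_apply₀' (hX.aemeasurable.nullMeasurable hs), inter_comm,
    smul_eq_mul]

theorem bivariate_gaussian_conditional_tail_general
    {Ω : Type*} [MeasurableSpace Ω] (P : Measure Ω) [IsProbabilityMeasure P]
    (Z Z' : Ω → ℝ)
    (hZ : Measure.map Z P = gaussianReal 0 1)
    (hZ' : Measure.map Z' P = gaussianReal 0 1)
    (hind : IndepFun Z Z' P)
    (ρ : ℝ) (hρ : ρ ∈ Set.Icc (0 : ℝ) 1) (x : ℝ)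
    (θ : ℝ) (hθ : θ = Real.sqrt ((1 - ρ) / (1 + ρ))) :
    gaussTail (θ * x)
      ≤ ((P[|{ω | x < Z ω}]) {ω | x < ρ * Z ω + Real.sqrt (1 - ρ ^ 2) * Z' ω}).toReal ∧
    ((P[|{ω | x < Z ω}]) {ω | x < ρ * Z ω + Real.sqrt (1 - ρ ^ 2) * Z' ω}).toReal
      ≤ (1 + ρ) * gaussTail (θ * x) := by
  obtain ⟨hρ0, hρ1⟩ := hρ
  have hsρ : √(1 - ρ ^ 2) ^ 2 + ρ ^ 2 = 1 := by rw [sq_sqrt (by nlinarith)]; ring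
  have hθs : θ * (1 + ρ) = √(1 - ρ ^ 2) := by
    have h : 1 - ρ ^ 2 = (1 - ρ) / (1 + ρ) * (1 + ρ) ^ 2 := by field_simp; ring
    rw [hθ, h, sqrt_mul (div_nonneg (by linarith) (by linarith)), sqrt_sq (by linarith)]
  set s := √(1 - ρ ^ 2)
  have hlaw := hind.hasLaw_prod (hasLaw_of_map_eq hZ) (hasLaw_of_map_eq hZ')
  have hcond : P[|{ω | x < Z ω}] {ω | x < ρ * Z ω + s * Z' ω}
      = (Measure.prod γ γ)[{p | x < ρ * p.1 + s * p.2} | {p | x < p.1}] :=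
    hlaw.cond_preimage (s := {p | x < p.1}) (t := {p | x < ρ * p.1 + s * p.2})
      (measurableSet_lt measurable_const measurable_fst)
      (measurableSet_lt measurable_const (by fun_prop))
  obtain ⟨hlow, hupp⟩ := gaussianReal_prod_cond_halfPlane hρ0 (sqrt_nonneg _) hsρ hθs x
  rw [hcond]
  refine ⟨toReal_mono (ne_top_of_le_ne_top (by finiteness) hupp) hlow, ?_⟩
  refine (toReal_mono (by finiteness) hupp).trans_eq ?_
  rw [toReal_mul, toReal_ofReal (by linarith)]
  rfl

/-- For independent standard Gaussians `Z, Z'`, `ρ ∈ [0,1]`, `x > 0` and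
`θ = √((1-ρ)/(1+ρ))`, we have
`Φ̄(θx) ≤ P(ρZ + √(1-ρ²) Z' > x ∣ Z > x) ≤ (1+ρ) Φ̄(θx)`. -/
theorem bivariate_gaussian_conditional_tail
    {Ω : Type*} [MeasurableSpace Ω] (P : Measure Ω) [IsProbabilityMeasure P]
    (Z Z' : Ω → ℝ)
    (hZ : Measure.map Z P = gaussianReal 0 1)
    (hZ' : Measure.map Z' P = gaussianReal 0 1)
    (hind : IndepFun Z Z' P)
    (ρ : ℝ) (hρ : ρ ∈ Set.Icc (0 : ℝ) 1) (x : ℝ) (hx : 0 < x)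
    (θ : ℝ) (hθ : θ = Real.sqrt ((1 - ρ) / (1 + ρ))) :
    gaussTail (θ * x)
      ≤ ((P[|{ω | x < Z ω}]) {ω | x < ρ * Z ω + Real.sqrt (1 - ρ ^ 2) * Z' ω}).toReal ∧
    ((P[|{ω | x < Z ω}]) {ω | x < ρ * Z ω + Real.sqrt (1 - ρ ^ 2) * Z' ω}).toReal
      ≤ (1 + ρ) * gaussTail (θ * x) :=
  bivariate_gaussian_conditional_tail_general P Z Z' hZ hZ' hind ρ hρ x θ hθ
end
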